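/- For the SDE with μ = 0 and σ = I₂ on ℝ² (two-dimensional Brownian motion), an infinitesimal stochastic transformation (Y, C, τ) with Y = (f, g)ᵀ, C = [[0, c], [−c, 0]] is a general infinitesimal symmetry (i.e. solves the determining equations ∂_x f = (1/2)τ, ∂_y f = c, ∂_x g = −c, ∂_y g = (1/2)τ, Δf = 0, Δg = 0) if and only if f, g satisfy the Cauchy–Riemann equations ∂_x f = ∂_y g and ∂_y f = −∂_x g, with c = ∂_y f and τ = 2∂_x f. -/

import Mathlib

/-- Partial derivative ∂ₖ f(x) on ℝ². -/
noncomputable def pd (f : (Fin 2 → ℝ) → ℝ) (k : Fin 2) (x : Fin 2 → ℝ) : ℝ :=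
  fderiv ℝ f x (Pi.single k 1)

lemma pd_comm (f : (Fin 2 → ℝ) → ℝ) (hf : ContDiff ℝ (⊤ : ℕ∞) f) (i j : Fin 2) (x : Fin 2 → ℝ) :
    pd (fun y => pd f i y) j x = pd (fun y => pd f j y) i x := by
  have hsym : IsSymmSndFDerivAt ℝ f x :=
    (hf.contDiffAt).isSymmSndFDerivAt (by rw [minSmoothness_of_isRCLikeNormedField]; exact WithTop.coe_le_coe.mpr le_top)
  have hd : Differentiable ℝ (fderiv ℝ f) :=
    (hf.fderiv_right (m := (⊤ : ℕ∞)) le_rfl).differentiable (by simp)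
  have key : ∀ v w : Fin 2 → ℝ,
      fderiv ℝ (fun y => fderiv ℝ f y v) x w = fderiv ℝ (fderiv ℝ f) x w v := by
    intro v w
    rw [fderiv_clm_apply (hd x) (differentiableAt_const v)]
    simp
  unfold pd
  rw [key, key, hsym]

lemma pd_congr (h k : (Fin 2 → ℝ) → ℝ) (hhk : ∀ x, h x = k x) (j : Fin 2) (x : Fin 2 → ℝ) :
    pd h j x = pd k j x := by
  have : h = k := funext hhk
  rw [this]

lemma pd_neg (h : (Fin 2 → ℝ) → ℝ) (j : Fin 2) (x : Fin 2 → ℝ) :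
    pd (fun y => -(h y)) j x = -(pd h j x) := by
  unfold pd
  rw [fderiv_fun_neg]
  simp

/-- for two-dimensional Brownian motion (μ = 0, σ = I₂ on ℝ²),
the triple (Y, C, τ) with Y = (f, g)ᵀ, C = [[0, c], [−c, 0]] solves the
determining equations if and only if f, g satisfy the Cauchy–Riemann equations
with c = ∂_y f and τ = 2 ∂_x f. -/
theorem brownian_symmetries_cauchy_riemann
    (f g c τ : (Fin 2 → ℝ) → ℝ)
    (hf : ContDiff ℝ (⊤ : ℕ∞) f) (hg : ContDiff ℝ (⊤ : ℕ∞) g)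
    (hc : ContDiff ℝ (⊤ : ℕ∞) c) (hτ : ContDiff ℝ (⊤ : ℕ∞) τ) :
    -- the determining equations
    ((∀ x, pd f 0 x = τ x / 2) ∧
     (∀ x, pd f 1 x = c x) ∧
     (∀ x, pd g 0 x = -c x) ∧
     (∀ x, pd g 1 x = τ x / 2) ∧
     (∀ x, pd (fun y => pd f 0 y) 0 x + pd (fun y => pd f 1 y) 1 x = 0) ∧
     (∀ x, pd (fun y => pd g 0 y) 0 x + pd (fun y => pd g 1 y) 1 x = 0))
    ↔
    -- Cauchy–Riemann equations together with c = ∂_y f, τ = 2∂_x f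
    ((∀ x, pd f 0 x = pd g 1 x) ∧
     (∀ x, pd f 1 x = -(pd g 0 x)) ∧
     (∀ x, c x = pd f 1 x) ∧
     (∀ x, τ x = 2 * pd f 0 x)) := by
  constructor
  · rintro ⟨h1, h2, h3, h4, _, _⟩
    refine ⟨fun x => by rw [h1, h4], fun x => by rw [h2, h3]; ring,
      fun x => (h2 x).symm, fun x => by rw [h1]; ring⟩
  · rintro ⟨cr1, cr2, hc', hτ'⟩
    refine ⟨fun x => by rw [hτ']; ring, fun x => (hc' x).symm,
      fun x => by rw [hc', cr2]; ring, fun x => by rw [← cr1, hτ']; ring, ?_, ?_⟩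
    · intro x
      rw [pd_congr _ _ cr1, pd_congr (fun y => pd f 1 y) (fun y => -(pd g 0 y)) cr2,
        pd_neg, pd_comm g hg 1 0 x]
      ring
    · intro x
      have cr2' : ∀ y, pd g 0 y = -(pd f 1 y) := fun y => by rw [cr2]; ring
      rw [pd_congr _ _ cr2', pd_congr (fun y => pd g 1 y) (fun y => pd f 0 y)
        (fun y => (cr1 y).symm), pd_neg, pd_comm f hf 1 0 x]
      ring
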